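/- arXiv:1203.1707 — 5 statements merged into one kernel-verified Lean document; each statement's English description precedes it below -/
import Mathlib

section
/- Discrete fractional integration by parts: Let d ≥ 1 and let G¹, G² ∈ (ℝ^d)^{N+1} satisfy G¹_0 = 0 and G²_N = 0. Then h ∑_{k=1}^{N} (ᶜΔ^α_− G¹)_k · G²_{k−1} = h ∑_{k=0}^{N−1} G¹_{k+1} · (ᶜΔ^α_+ G²)_k. -/
open Finset Filter
open scoped RealInnerProductSpace Topology

noncomputable section

/-- `ℝ^n` with the euclidean norm. -/
abbrev Euc (n : ℕ) : Type := EuclideanSpace ℝ (Fin n)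

/-- The Grünwald–Letnikov coefficients `α_r = (−α)(1−α)⋯(r−1−α)/r!`, with `α_0 = 1`. -/
def glCoef (α : ℝ) (r : ℕ) : ℝ :=
  (∏ i ∈ Finset.range r, ((i : ℝ) - α)) / (Nat.factorial r : ℝ)

/-- Left discrete fractional derivative `(Δ^α_− G)_k = h^{−α} ∑_{r=0}^{k} α_r G_{k−r}`. -/
def dMinus {n : ℕ} (α h : ℝ) (G : ℕ → Euc n) (k : ℕ) : Euc n :=
  (h ^ (-α)) • ∑ r ∈ Finset.range (k + 1), glCoef α r • G (k - r)

/-- Right discrete fractional derivative `(Δ^α_+ G)_k = h^{−α} ∑_{r=0}^{N−k} α_r G_{k+r}`. -/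
def dPlus {n : ℕ} (N : ℕ) (α h : ℝ) (G : ℕ → Euc n) (k : ℕ) : Euc n :=
  (h ^ (-α)) • ∑ r ∈ Finset.range (N - k + 1), glCoef α r • G (k + r)

/-- Left Caputo discrete fractional derivative `(ᶜΔ^α_− G)_k = h^{−α} ∑_{r=0}^{k} α_r (G_{k−r} − G_0)`. -/
def cdMinus {n : ℕ} (α h : ℝ) (G : ℕ → Euc n) (k : ℕ) : Euc n :=
  dMinus α h (fun j => G j - G 0) k

/-- Right Caputo discrete fractional derivative
`(ᶜΔ^α_+ G)_k = h^{−α} ∑_{r=0}^{N−k} α_r (G_{k+r} − G_N)`. -/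
def cdPlus {n : ℕ} (N : ℕ) (α h : ℝ) (G : ℕ → Euc n) (k : ℕ) : Euc n :=
  dPlus N α h (fun j => G j - G N) k

/-! Once `G¹_0 = 0` and `G²_N = 0`, the Caputo derivatives coincide with the plain ones, and the
boundary terms `k - r = 0` on the left and `k + r = N` on the right vanish. Both sides are then
`h^{1-α}` times the sum of `α_{j+1-i} ⟪G¹_i, G²_j⟫` over the triangle `1 ≤ i ≤ j + 1 ≤ N`,
taken row by row on the left and column by column on the right. -/

section TriangleSums

variable {R M : Type*} [AddCommMonoid M] [SMulZeroClass R M]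

theorem sum_Icc_sum_range_smul_eq_sum_range_sum_range {N : ℕ} (c : ℕ → R) {φ : ℕ → ℕ → M}
    (hφ : ∀ j, φ 0 j = 0) :
    ∑ k ∈ Icc 1 N, ∑ r ∈ range (k + 1), c r • φ (k - r) (k - 1)
      = ∑ j ∈ range N, ∑ i ∈ range (j + 1), c (j - i) • φ (i + 1) j := by
  rw [← Ico_add_one_right_eq_Icc, sum_Ico_eq_sum_range, Nat.add_sub_cancel]
  refine sum_congr rfl fun j _ => ?_
  rw [add_comm 1 j, Nat.add_sub_cancel, sum_range_succ, Nat.sub_self, hφ, smul_zero, add_zero,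
    ← sum_range_reflect]
  refine sum_congr rfl fun r hr => ?_
  have hrj : r ≤ j := Nat.le_of_lt_succ (mem_range.mp hr)
  rw [Nat.add_sub_cancel, show j + 1 - (j - r) = r + 1 by omega]

theorem sum_range_sum_range_smul_eq_sum_range_sum_Ico {N : ℕ} (c : ℕ → R) {φ : ℕ → ℕ → M}
    (hφ : ∀ i, φ i N = 0) :
    ∑ k ∈ range N, ∑ r ∈ range (N - k + 1), c r • φ (k + 1) (k + r)
      = ∑ i ∈ range N, ∑ j ∈ Ico i N, c (j - i) • φ (i + 1) j := by
  refine sum_congr rfl fun i hi => ?_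
  rw [sum_range_succ, Nat.add_sub_cancel' (mem_range.mp hi).le, hφ, smul_zero, add_zero,
    sum_Ico_eq_sum_range]
  simp only [Nat.add_sub_cancel_left]

theorem sum_Icc_sum_range_smul_eq_sum_range_sum_range_add {N : ℕ} (c : ℕ → R)
    {φ : ℕ → ℕ → M} (hφ₀ : ∀ j, φ 0 j = 0) (hφN : ∀ i, φ i N = 0) :
    ∑ k ∈ Icc 1 N, ∑ r ∈ range (k + 1), c r • φ (k - r) (k - 1)
      = ∑ k ∈ range N, ∑ r ∈ range (N - k + 1), c r • φ (k + 1) (k + r) := by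
  rw [sum_Icc_sum_range_smul_eq_sum_range_sum_range c hφ₀,
    sum_range_sum_range_smul_eq_sum_range_sum_Ico c hφN, range_eq_Ico,
    sum_Ico_Ico_comm]
  simp only [range_eq_Ico]

end TriangleSums

theorem cdMinus_eq_dMinus {n : ℕ} (α h : ℝ) {G : ℕ → Euc n} (hG : G 0 = 0) :
    cdMinus α h G = dMinus α h G := by
  funext k
  simp only [cdMinus, hG, sub_zero]

theorem cdPlus_eq_dPlus {n N : ℕ} (α h : ℝ) {G : ℕ → Euc n} (hG : G N = 0) :
    cdPlus N α h G = dPlus N α h G := by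
  funext k
  simp only [cdPlus, hG, sub_zero]

theorem sum_inner_dMinus_eq_sum_inner_dPlus {n N : ℕ} (α h : ℝ) {F G : ℕ → Euc n}
    (hF : F 0 = 0) (hG : G N = 0) :
    ∑ k ∈ Icc 1 N, ⟪dMinus α h F k, G (k - 1)⟫
      = ∑ k ∈ range N, ⟪F (k + 1), dPlus N α h G k⟫ := by
  simp only [dMinus, dPlus, real_inner_smul_left, real_inner_smul_right, sum_inner, inner_sum,
    ← mul_sum, ← smul_eq_mul (a := glCoef α _)]
  rw [sum_Icc_sum_range_smul_eq_sum_range_sum_range_add (glCoef α)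
    (φ := fun i j => ⟪F i, G j⟫) (by simp [hF]) (by simp [hG])]

theorem discrete_fractional_integration_by_parts_general
    (d N : ℕ) (a b : ℝ)
    (α : ℝ)
    (G1 G2 : ℕ → Euc d) (hG1 : G1 0 = 0) (hG2 : G2 N = 0) :
    (((b - a) / (N : ℝ)) * ∑ k ∈ Finset.Icc 1 N,
        ⟪cdMinus α ((b - a) / (N : ℝ)) G1 k, G2 (k - 1)⟫)
      = (((b - a) / (N : ℝ)) * ∑ k ∈ Finset.range N,
        ⟪G1 (k + 1), cdPlus N α ((b - a) / (N : ℝ)) G2 k⟫) := by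
  rw [cdMinus_eq_dMinus _ _ hG1, cdPlus_eq_dPlus _ _ hG2,
    sum_inner_dMinus_eq_sum_inner_dPlus _ _ hG1 hG2]

/-- **Discrete fractional integration by parts.** -/
theorem discrete_fractional_integration_by_parts
    (d N : ℕ) (hd : 1 ≤ d) (hN : 1 ≤ N) (a b : ℝ) (hab : a < b)
    (α : ℝ) (hα : 0 < α) (hα1 : α ≤ 1)
    (G1 G2 : ℕ → Euc d) (hG1 : G1 0 = 0) (hG2 : G2 N = 0) :
    (((b - a) / (N : ℝ)) * ∑ k ∈ Finset.Icc 1 N,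
        ⟪cdMinus α ((b - a) / (N : ℝ)) G1 k, G2 (k - 1)⟫)
      = (((b - a) / (N : ℝ)) * ∑ k ∈ Finset.range N,
        ⟪G1 (k + 1), cdPlus N α ((b - a) / (N : ℝ)) G2 k⟫) :=
  discrete_fractional_integration_by_parts_general d N a b α G1 G2 hG1 hG2
end
end

section
/- Discrete fractional Cauchy–Lipschitz theorem (left case): Let d ≥ 1, A ∈ ℝ^d, and let F : ℝ^d × [a,b] → ℝ^d be continuous and satisfy ‖F(x₁,t) − F(x₂,t)‖ ≤ K ‖x₁ − x₂‖ for all x₁, x₂ ∈ ℝ^d and t ∈ [a,b], for some K ≥ 0 with h^α K < 1. Then there exists a unique Q ∈ (ℝ^d)^{N+1} such that Q_0 = A and (ᶜΔ^α_− Q)_k = F(Q_k, t_k) for every k = 1,…,N. -/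
/-! At step `k` the Caputo equation, multiplied by `h^α` and using `α_0 = 1`, reads
`Q_k = Q_0 - ∑_{r=1}^{k} α_r (Q_{k-r} - Q_0) + h^α F(Q_k, t_k)`. Once `Q_0, …, Q_{k-1}` are known
this is a fixed-point equation for `Q_k` whose right-hand side is `h^α K`-Lipschitz in `Q_k`, hence a
contraction; Banach's theorem determines `Q_k` uniquely, and induction on `k` builds the whole
solution and proves its uniqueness. -/

open Finset Filter
open scoped RealInnerProductSpace Topology

noncomputable section

/-- A scheme whose `k`-th equation pins down `Q k` as soon as `Q 0, …, Q (k-1)` are fixed. -/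
def IsCausalScheme {E : Type*} (N : ℕ) (P : (ℕ → E) → ℕ → Prop) : Prop :=
  ∀ (Q : ℕ → E) (k : ℕ), 1 ≤ k → k ≤ N →
    ∃ x, ∀ Q' : ℕ → E, (∀ j < k, Q' j = Q j) → (P Q' k ↔ Q' k = x)

namespace IsCausalScheme

variable {E : Type*} {N : ℕ} {P : (ℕ → E) → ℕ → Prop}

theorem exists_solution (hP : IsCausalScheme N P) (A : E) :
    ∃ Q : ℕ → E, Q 0 = A ∧ ∀ k, 1 ≤ k → k ≤ N → P Q k := by
  suffices ∀ n, ∃ Q : ℕ → E, Q 0 = A ∧ ∀ k, 1 ≤ k → k ≤ n → k ≤ N → P Q k by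
    obtain ⟨Q, hQ0, hQ⟩ := this N
    exact ⟨Q, hQ0, fun k hk1 hkN => hQ k hk1 hkN hkN⟩
  intro n
  induction n with
  | zero => exact ⟨fun _ => A, rfl, fun k hk1 hk0 _ => by omega⟩
  | succ n ih =>
    obtain ⟨Q, hQ0, hQ⟩ := ih
    by_cases hnN : n + 1 ≤ N
    · obtain ⟨x, hx⟩ := hP Q (n + 1) (by omega) hnN
      have hpast : ∀ j ≤ n, Function.update Q (n + 1) x j = Q j := fun j hj =>
        Function.update_of_ne (by omega) _ _
      refine ⟨Function.update Q (n + 1) x, by rw [hpast 0 (by omega), hQ0], ?_⟩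
      intro k hk1 hkn hkN
      obtain rfl | hkn : k = n + 1 ∨ k ≤ n := by omega
      · exact (hx _ fun j hj => hpast j (by omega)).2 (Function.update_self _ _ _)
      · obtain ⟨y, hy⟩ := hP Q k hk1 hkN
        rw [hy _ fun j hj => hpast j (by omega), hpast k hkn, ← hy Q fun _ _ => rfl]
        exact hQ k hk1 hkn hkN
    · exact ⟨Q, hQ0, fun k hk1 hkn hkN => hQ k hk1 (by omega) hkN⟩

theorem eq_of_solution (hP : IsCausalScheme N P) {Q Q' : ℕ → E} (h0 : Q 0 = Q' 0)
    (hQ : ∀ k, 1 ≤ k → k ≤ N → P Q k) (hQ' : ∀ k, 1 ≤ k → k ≤ N → P Q' k) :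
    ∀ k ≤ N, Q k = Q' k := by
  intro k
  induction k using Nat.strong_induction_on with
  | _ k ih =>
    intro hkN
    rcases Nat.eq_zero_or_pos k with rfl | hk1
    · exact h0
    · obtain ⟨x, hx⟩ := hP Q k hk1 hkN
      rw [(hx Q fun _ _ => rfl).1 (hQ k hk1 hkN),
        (hx Q' fun j hj => (ih j hj (by omega)).symm).1 (hQ' k hk1 hkN)]

end IsCausalScheme

theorem existsUnique_eq_add_smul {E : Type*} [NormedAddCommGroup E] [NormedSpace ℝ E]
    [CompleteSpace E] {f : E → E} {K c : ℝ} (hK : 0 ≤ K) (hc : 0 ≤ c)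
    (hf : ∀ x y, ‖f x - f y‖ ≤ K * ‖x - y‖) (hcK : c * K < 1) (v : E) :
    ∃! x, x = v + c • f x := by
  have hcontr : ContractingWith ⟨c * K, mul_nonneg hc hK⟩ (fun x => v + c • f x) := by
    refine ⟨hcK, lipschitzWith_iff_norm_sub_le.2 fun x y => ?_⟩
    calc ‖v + c • f x - (v + c • f y)‖ = c * ‖f x - f y‖ := by
          rw [add_sub_add_left_eq_sub, ← smul_sub, norm_smul, Real.norm_of_nonneg hc]
      _ ≤ c * (K * ‖x - y‖) := mul_le_mul_of_nonneg_left (hf x y) hc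
      _ = c * K * ‖x - y‖ := (mul_assoc _ _ _).symm
  exact ⟨hcontr.fixedPoint _, hcontr.fixedPoint_isFixedPt.symm,
    fun y hy => hcontr.fixedPoint_unique hy.symm⟩

@[simp]
theorem glCoef_zero (α : ℝ) : glCoef α 0 = 1 := by
  simp [glCoef]

def cdMinusMemory {n : ℕ} (α : ℝ) (G : ℕ → Euc n) (k : ℕ) : Euc n :=
  ∑ r ∈ Ico 1 (k + 1), glCoef α r • (G (k - r) - G 0)

theorem cdMinusMemory_congr {n : ℕ} (α : ℝ) {G G' : ℕ → Euc n} {k : ℕ}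
    (h : ∀ j < k, G j = G' j) : cdMinusMemory α G k = cdMinusMemory α G' k := by
  refine sum_congr rfl fun r hr => ?_
  rw [mem_Ico] at hr
  rw [h (k - r) (by omega), h 0 (by omega)]

theorem cdMinus_eq_smul {n : ℕ} (α h : ℝ) (G : ℕ → Euc n) (k : ℕ) :
    cdMinus α h G k = h ^ (-α) • (G k - G 0 + cdMinusMemory α G k) := by
  rw [cdMinus, dMinus, sum_range_eq_add_Ico _ k.succ_pos, glCoef_zero, one_smul, Nat.sub_zero,
    cdMinusMemory]

theorem cdMinus_eq_iff {n : ℕ} {α h : ℝ} (hh : 0 < h) (G : ℕ → Euc n) (k : ℕ) (y : Euc n) :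
    cdMinus α h G k = y ↔ G k = G 0 - cdMinusMemory α G k + h ^ α • y := by
  rw [cdMinus_eq_smul, Real.rpow_neg hh.le, inv_smul_eq_iff₀ (Real.rpow_pos_of_pos hh α).ne']
  constructor <;> intro H
  · rw [← H]; abel
  · rw [H]; abel

theorem add_mul_div_mem_Icc {a b : ℝ} (hab : a ≤ b) {k N : ℕ} (hk : k ≤ N) :
    a + k * ((b - a) / N) ∈ Set.Icc a b := by
  rw [show (k : ℝ) * ((b - a) / N) = k / N * (b - a) by ring]
  have hkN : (k : ℝ) / N ≤ 1 := div_le_one_of_le₀ (by exact_mod_cast hk) N.cast_nonneg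
  have hkN' : 0 ≤ (k : ℝ) / N := by positivity
  constructor <;> nlinarith

theorem isCausalScheme_cdMinus {n : ℕ} {N : ℕ} {α h K : ℝ} (hh : 0 < h) (hK : 0 ≤ K)
    (hKsmall : h ^ α * K < 1) (F : Euc n → ℝ → Euc n) (t : ℕ → ℝ)
    (hLip : ∀ k, 1 ≤ k → k ≤ N → ∀ x₁ x₂, ‖F x₁ (t k) - F x₂ (t k)‖ ≤ K * ‖x₁ - x₂‖) :
    IsCausalScheme N fun Q k => cdMinus α h Q k = F (Q k) (t k) := by
  intro Q k hk1 hkN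
  obtain ⟨x, hx_eq, hx⟩ := existsUnique_eq_add_smul hK (Real.rpow_pos_of_pos hh α).le
    (hLip k hk1 hkN) hKsmall (Q 0 - cdMinusMemory α Q k)
  refine ⟨x, fun Q' hQ' => ?_⟩
  beta_reduce
  rw [cdMinus_eq_iff hh, cdMinusMemory_congr α hQ', hQ' 0 hk1]
  exact ⟨hx _, fun H => H ▸ hx_eq⟩

theorem discrete_fractional_cauchy_lipschitz_left_general
    (d N : ℕ) (hN : 1 ≤ N) (a b : ℝ) (hab : a < b)
    (α : ℝ) (A : Euc d)
    (F : Euc d → ℝ → Euc d)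
    (K : ℝ) (hK : 0 ≤ K)
    (hLip : ∀ x₁ x₂ : Euc d, ∀ t ∈ Set.Icc a b, ‖F x₁ t - F x₂ t‖ ≤ K * ‖x₁ - x₂‖)
    (hKsmall : ((b - a) / (N : ℝ)) ^ α * K < 1) :
    ∃ Q : ℕ → Euc d,
      (Q 0 = A ∧ ∀ k, 1 ≤ k → k ≤ N →
        cdMinus α ((b - a) / (N : ℝ)) Q k = F (Q k) (a + (k : ℝ) * ((b - a) / (N : ℝ)))) ∧
      ∀ Q' : ℕ → Euc d,
        (Q' 0 = A ∧ ∀ k, 1 ≤ k → k ≤ N →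
          cdMinus α ((b - a) / (N : ℝ)) Q' k = F (Q' k) (a + (k : ℝ) * ((b - a) / (N : ℝ)))) →
        ∀ k ≤ N, Q k = Q' k := by
  have hh : 0 < (b - a) / (N : ℝ) := div_pos (sub_pos.2 hab) (by exact_mod_cast hN)
  have hP := isCausalScheme_cdMinus (N := N) (α := α) hh hK hKsmall F
    (fun k => a + (k : ℝ) * ((b - a) / (N : ℝ)))
    fun k _ hkN x₁ x₂ => hLip x₁ x₂ _ (add_mul_div_mem_Icc hab.le hkN)
  obtain ⟨Q, hQ0, hQ⟩ := hP.exists_solution A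
  exact ⟨Q, ⟨hQ0, hQ⟩, fun Q' ⟨hQ'0, hQ'⟩ => hP.eq_of_solution (hQ0.trans hQ'0.symm) hQ hQ'⟩

/-- **Discrete fractional Cauchy–Lipschitz theorem (left case).** -/
theorem discrete_fractional_cauchy_lipschitz_left
    (d N : ℕ) (hd : 1 ≤ d) (hN : 1 ≤ N) (a b : ℝ) (hab : a < b)
    (α : ℝ) (hα : 0 < α) (hα1 : α ≤ 1) (A : Euc d)
    (F : Euc d → ℝ → Euc d)
    (hFcont : ContinuousOn (fun p : Euc d × ℝ => F p.1 p.2) (Set.univ ×ˢ Set.Icc a b))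
    (K : ℝ) (hK : 0 ≤ K)
    (hLip : ∀ x₁ x₂ : Euc d, ∀ t ∈ Set.Icc a b, ‖F x₁ t - F x₂ t‖ ≤ K * ‖x₁ - x₂‖)
    (hKsmall : ((b - a) / (N : ℝ)) ^ α * K < 1) :
    ∃ Q : ℕ → Euc d,
      (Q 0 = A ∧ ∀ k, 1 ≤ k → k ≤ N →
        cdMinus α ((b - a) / (N : ℝ)) Q k = F (Q k) (a + (k : ℝ) * ((b - a) / (N : ℝ)))) ∧
      ∀ Q' : ℕ → Euc d,
        (Q' 0 = A ∧ ∀ k, 1 ≤ k → k ≤ N →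
          cdMinus α ((b - a) / (N : ℝ)) Q' k = F (Q' k) (a + (k : ℝ) * ((b - a) / (N : ℝ)))) →
        ∀ k ≤ N, Q k = Q' k :=
  discrete_fractional_cauchy_lipschitz_left_general d N hN a b hab α A F K hK hLip hKsmall
end
end

section
/- Representation of the Gâteaux derivative via the Hamiltonian: Let U, Ū ∈ (ℝ^m)^{N+1}. Then the limit DL^α_h(U)(Ū) = lim_{ε→0} (L^α_h(U+εŪ) − L^α_h(U))/ε exists and equals h ∑_{k=1}^{N} ∂H/∂v(Q^{U}_k, U_k, P^{U}_{k−1}, t_k) · Ū_k. -/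
/-!
For fixed `k`, the perturbed state `Q^{U+εŪ}_k` is the fixed point of
`x ↦ Q_0 - ∑_{r=1}^{k} α_r (Q_{k-r} - Q_0) + h^α f(x, U_k + εŪ_k, t_k)`, a contraction in `x`
since `h^α M < 1`. By the implicit function theorem and induction on `k` the states depend `C¹`
on `ε`, and their derivative `y` solves the linearized state equation
`ᶜΔ^α_− y_k = ∂ₓf_k y_k + ∂ᵥf_k Ū_k`, with `y_0 = 0`. Pairing it with `P_{k-1}` and
exchanging the two finite sums (the discrete operators `Δ^α_−` and `Δ^α_+` are transposes of each
other), the adjoint equation turns `∑ ∂ₓL_k y_k`, the contribution of the state to the derivative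
of the cost, into `∑ P_{k-1} · ∂ᵥf_k Ū_k`; added to `∑ ∂ᵥL_k Ū_k` this is `∑ ∂H/∂v_k Ū_k`.
-/

open Finset Filter
open scoped RealInnerProductSpace Topology

noncomputable section

/-- The Hamiltonian `H(x,v,w,t) = L(x,v,t) + w · f(x,v,t)` associated to the Lagrangian `L`
and the constraint function `f`. -/
def Ham {d m : ℕ} (L : Euc d → Euc m → ℝ → ℝ) (f : Euc d → Euc m → ℝ → Euc d)
    (x : Euc d) (v : Euc m) (w : Euc d) (t : ℝ) : ℝ :=
  L x v t + ⟪w, f x v t⟫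

section FixedPoint

variable {𝕜 : Type*} [RCLike 𝕜]
  {E : Type*} [NormedAddCommGroup E] [NormedSpace 𝕜 E] [CompleteSpace E]
  {X : Type*} [NormedAddCommGroup X] [NormedSpace 𝕜 X] [CompleteSpace X]

theorem isInvertible_id_sub_of_norm_lt_one {T : X →L[𝕜] X} (hT : ‖T‖ < 1) :
    (ContinuousLinearMap.id 𝕜 X - T).IsInvertible := by
  obtain ⟨u, hu⟩ := isUnit_one_sub_of_norm_lt_one hT
  exact ⟨ContinuousLinearEquiv.unitsEquiv 𝕜 X u, by ext; simp [hu]⟩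

theorem contDiff_of_isFixedPt_of_contractingWith {n : WithTop ℕ∞} (hn : n ≠ 0) {K : NNReal}
    {φ : E × X → X} (hφ : ContDiff 𝕜 n φ) (hK : ∀ x, ContractingWith K fun y => φ (x, y))
    {g : E → X} (hg : ∀ x, Function.IsFixedPt (fun y => φ (x, y)) (g x)) :
    ContDiff 𝕜 n g := by
  refine contDiff_iff_contDiffAt.2 fun x₀ => ?_
  set F : E × X → X := fun p => p.2 - φ p
  have hF : ContDiff 𝕜 n F := contDiff_snd.sub hφ
  have hpartial : fderiv 𝕜 F (x₀, g x₀) ∘L .inr 𝕜 E X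
      = .id 𝕜 X - fderiv 𝕜 (fun y => φ (x₀, y)) (g x₀) := by
    have hφd := (hφ.differentiable hn (x₀, g x₀)).hasFDerivAt
    rw [(hasFDerivAt_snd.fun_sub hφd).fderiv,
      (hφd.comp (g x₀) (hasFDerivAt_prodMk_right x₀ (g x₀))).fderiv (f := fun y => φ (x₀, y))]
    ext v; simp
  have hinv : (fderiv 𝕜 F (x₀, g x₀) ∘L .inr 𝕜 E X).IsInvertible := by
    rw [hpartial]
    exact isInvertible_id_sub_of_norm_lt_one
      ((norm_fderiv_le_of_lipschitz 𝕜 (hK x₀).2).trans_lt (by exact_mod_cast (hK x₀).1))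
  have hFat := hF.contDiffAt (x := (x₀, g x₀))
  refine (hFat.contDiffAt_implicitFunction hn hinv).congr_of_eventuallyEq ?_
  filter_upwards [hFat.eventually_apply_implicitFunction hn hinv] with x hx
  refine (hK x).fixedPoint_unique' (hg x) ?_
  simp only [F, (hg x₀).eq, sub_self, sub_eq_zero] at hx
  exact hx.symm

end FixedPoint

theorem DifferentiableAt.hasDerivAt_comp_prodMk
    {E F G : Type*} [NormedAddCommGroup E] [NormedSpace ℝ E] [NormedAddCommGroup F]
    [NormedSpace ℝ F] [NormedAddCommGroup G] [NormedSpace ℝ G]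
    {Φ : E → F → G} {x : ℝ → E} {v : ℝ → F} {x' : E} {v' : F} {s : ℝ}
    (hΦ : DifferentiableAt ℝ (fun p : E × F => Φ p.1 p.2) (x s, v s))
    (hx : HasDerivAt x x' s) (hv : HasDerivAt v v' s) :
    HasDerivAt (fun s => Φ (x s) (v s))
      (fderiv ℝ (fun y => Φ y (v s)) (x s) x' + fderiv ℝ (Φ (x s)) (v s) v') s := by
  have hΦ' := hΦ.hasFDerivAt
  have hfst : HasFDerivAt (fun y => Φ y (v s))
      (fderiv ℝ (fun p : E × F => Φ p.1 p.2) (x s, v s) ∘L .inl ℝ E F) (x s) :=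
    hΦ'.comp (f := fun y => (y, v s)) (x s) (hasFDerivAt_prodMk_left (x s) (v s))
  have hsnd : HasFDerivAt (Φ (x s))
      (fderiv ℝ (fun p : E × F => Φ p.1 p.2) (x s, v s) ∘L .inr ℝ E F) (v s) :=
    hΦ'.comp (f := fun w => (x s, w)) (v s) (hasFDerivAt_prodMk_right (x s) (v s))
  have hsplit : fderiv ℝ (fun y => Φ y (v s)) (x s) x' + fderiv ℝ (Φ (x s)) (v s) v'
      = fderiv ℝ (fun p : E × F => Φ p.1 p.2) (x s, v s) (x', v') := by
    rw [hfst.fderiv, hsnd.fderiv, ContinuousLinearMap.comp_apply,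
      ContinuousLinearMap.comp_apply, ← map_add]
    simp
  rw [hsplit]
  exact hΦ'.comp_hasDerivAt s (hx.prodMk hv)

theorem Differentiable.differentiableAt_fix_last {E F G : Type*} [NormedAddCommGroup E]
    [NormedSpace ℝ E] [NormedAddCommGroup F] [NormedSpace ℝ F] [NormedAddCommGroup G]
    [NormedSpace ℝ G] {Φ : E → F → ℝ → G}
    (hΦ : Differentiable ℝ fun p : E × F × ℝ => Φ p.1 p.2.1 p.2.2) (s : ℝ) (p : E × F) :
    DifferentiableAt ℝ (fun p : E × F => Φ p.1 p.2 s) p :=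
  (hΦ _).comp p
    (differentiableAt_fst.prodMk (differentiableAt_snd.prodMk (differentiableAt_const s)))

theorem sum_Icc_one_eq_sum_range {M : Type*} [AddCommMonoid M] (F : ℕ → M) (N : ℕ) :
    ∑ k ∈ Icc 1 N, F k = ∑ i ∈ range N, F (i + 1) := by
  rw [range_eq_Ico, sum_Ico_add', ← Ico_add_one_right_eq_Icc, zero_add]

theorem sum_inner_sum_smul_sub_comm {E : Type*} [NormedAddCommGroup E] [InnerProductSpace ℝ E]
    (c : ℕ → ℝ) (P y : ℕ → E) (hy0 : y 0 = 0) (N : ℕ) :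
    ∑ k ∈ Icc 1 N, ⟪P (k - 1), ∑ r ∈ range (k + 1), c r • y (k - r)⟫
      = ∑ i ∈ range N, ⟪∑ r ∈ range (N - i), c r • P (i + r), y (i + 1)⟫ := by
  have hleft : ∀ k, ⟪P (k - 1), ∑ r ∈ range (k + 1), c r • y (k - r)⟫
      = ∑ j ∈ Ico 1 (k + 1), c (k - j) * ⟪P (k - 1), y j⟫ := by
    intro k
    rw [inner_sum, ← sum_range_reflect, range_eq_Ico, sum_eq_sum_Ico_succ_bot k.succ_pos]
    simp only [real_inner_smul_right, add_tsub_cancel_right, Nat.sub_zero, Nat.sub_self, hy0,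
      inner_zero_right, mul_zero, zero_add]
    exact sum_congr rfl fun j hj => by rw [Nat.sub_sub_self (by grind)]
  have hright : ∀ i, ⟪∑ r ∈ range (N - i), c r • P (i + r), y (i + 1)⟫
      = ∑ k ∈ Ico (i + 1) (N + 1), c (k - (i + 1)) * ⟪P (k - 1), y (i + 1)⟫ := by
    intro i
    rw [sum_inner, sum_Ico_eq_sum_range, Nat.add_sub_add_right]
    refine sum_congr rfl fun r _ => ?_
    rw [real_inner_smul_left, Nat.add_sub_cancel_left, add_right_comm, Nat.add_sub_cancel]
  -- both sides are `∑_{1 ≤ j ≤ k ≤ N} c (k - j) * ⟪P (k - 1), y j⟫`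
  simp only [hleft, hright]
  rw [← sum_Icc_one_eq_sum_range (fun j => ∑ k ∈ Ico j (N + 1), c (k - j) * ⟪P (k - 1), y j⟫),
    ← Ico_add_one_right_eq_Icc]
  exact (sum_Ico_Ico_comm 1 (N + 1) fun j k => c (k - j) * ⟪P (k - 1), y j⟫).symm

theorem sum_inner_eq_sum_inner_of_linearized_of_adjoint {E : Type*} [NormedAddCommGroup E]
    [InnerProductSpace ℝ E] [CompleteSpace E] {N : ℕ} {c : ℕ → ℝ} {s : ℝ} (hs : s ≠ 0)
    {B : ℕ → E →L[ℝ] E} {g b y P : ℕ → E} (hy0 : y 0 = 0)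
    (hy : ∀ k ∈ Icc 1 N, ∑ r ∈ range (k + 1), c r • y (k - r) = s • (B k (y k) + b k))
    (hP : ∀ i < N, ∑ r ∈ range (N - i), c r • P (i + r)
      = s • (g (i + 1) + ContinuousLinearMap.adjoint (B (i + 1)) (P i))) :
    ∑ k ∈ Icc 1 N, ⟪g k, y k⟫ = ∑ k ∈ Icc 1 N, ⟪P (k - 1), b k⟫ := by
  have key := sum_inner_sum_smul_sub_comm c P y hy0 N
  rw [sum_congr rfl fun k hk => congrArg _ (hy k hk),
    sum_congr rfl fun i hi => congrArg (⟪·, y (i + 1)⟫) (hP i (mem_range.1 hi))] at key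
  simp only [sum_Icc_one_eq_sum_range, Nat.add_sub_cancel, real_inner_smul_left,
    real_inner_smul_right, inner_add_left, inner_add_right,
    ContinuousLinearMap.adjoint_inner_left, ← mul_sum, sum_add_distrib] at key ⊢
  linarith [mul_left_cancel₀ hs key]

theorem rpow_smul_cdMinus {n : ℕ} {α h : ℝ} (hh : 0 < h) (G : ℕ → Euc n) (k : ℕ) :
    h ^ α • cdMinus α h G k = ∑ r ∈ range (k + 1), glCoef α r • (G (k - r) - G 0) := by
  rw [cdMinus, dMinus, Real.rpow_neg hh.le, smul_inv_smul₀ (Real.rpow_pos_of_pos hh α).ne']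

theorem eq_sub_sum_add_rpow_smul_cdMinus {n : ℕ} {α h : ℝ} (hh : 0 < h) (G : ℕ → Euc n)
    (k : ℕ) : G k = G 0 - ∑ r ∈ range k, glCoef α (r + 1) • (G (k - (r + 1)) - G 0)
      + h ^ α • cdMinus α h G k := by
  rw [rpow_smul_cdMinus hh, sum_range_succ', glCoef, range_zero, prod_empty]
  simp only [Nat.factorial_zero, Nat.cast_one, div_one, one_smul, Nat.sub_zero]
  abel

theorem rpow_smul_cdPlus_of_eq_zero {n N : ℕ} {α h : ℝ} (hh : 0 < h) {P : ℕ → Euc n}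
    (hPN : P N = 0) {k : ℕ} (hk : k ≤ N) :
    h ^ α • cdPlus N α h P k = ∑ r ∈ range (N - k), glCoef α r • P (k + r) := by
  rw [cdPlus, dPlus, Real.rpow_neg hh.le, smul_inv_smul₀ (Real.rpow_pos_of_pos hh α).ne',
    sum_range_succ, Nat.add_sub_cancel' hk]
  simp [hPN]

theorem fderiv_Ham_apply {d m : ℕ} {L : Euc d → Euc m → ℝ → ℝ} {f : Euc d → Euc m → ℝ → Euc d}
    {x w : Euc d} {v u : Euc m} {s : ℝ} (hL : DifferentiableAt ℝ (fun v => L x v s) v)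
    (hf : DifferentiableAt ℝ (fun v => f x v s) v) :
    fderiv ℝ (fun v => Ham L f x v w s) v u
      = fderiv ℝ (fun v => L x v s) v u + ⟪w, fderiv ℝ (fun v => f x v s) v u⟫ := by
  simp only [Ham]
  rw [fderiv_fun_add hL ((differentiableAt_const w).inner ℝ hf), add_apply,
    fderiv_inner_apply ℝ (differentiableAt_const w) hf]
  simp

section DiscreteState

variable {d m N : ℕ} {α h M : ℝ} {t : ℕ → ℝ} {A : Euc d} {f : Euc d → Euc m → ℝ → Euc d}
  {L : Euc d → Euc m → ℝ → ℝ} {V : ℝ → ℕ → Euc m} {Q : ℝ → ℕ → Euc d} {P : ℕ → Euc d}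

theorem contDiff_discreteState (hh : 0 < h) (hcontr : h ^ α * M < 1)
    (hf : ContDiff ℝ 1 fun p : Euc d × Euc m × ℝ => f p.1 p.2.1 p.2.2)
    (hLip : ∀ k ≤ N, ∀ x₁ x₂ v, ‖f x₁ v (t k) - f x₂ v (t k)‖ ≤ M * ‖x₁ - x₂‖)
    (hV : ∀ k, ContDiff ℝ 1 fun ε => V ε k) (hQ0 : ∀ ε, Q ε 0 = A)
    (hQ : ∀ ε k, 1 ≤ k → k ≤ N → cdMinus α h (Q ε) k = f (Q ε k) (V ε k) (t k)) :
    ∀ k ≤ N, ContDiff ℝ 1 fun ε => Q ε k := by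
  intro k
  induction k using Nat.strong_induction_on with
  | _ k ih =>
    intro hk
    rcases Nat.eq_zero_or_pos k with rfl | hk1
    · simpa only [hQ0] using contDiff_const
    set φ : ℝ × Euc d → Euc d := fun p =>
      A - ∑ r ∈ range k, glCoef α (r + 1) • (Q p.1 (k - (r + 1)) - A)
        + h ^ α • f p.2 (V p.1 k) (t k)
    have hφ : ContDiff ℝ 1 φ := by
      refine (contDiff_const.sub (ContDiff.sum fun r _ => ?_)).add (ContDiff.const_smul _ ?_)
      · have := ih (k - (r + 1)) (by omega) (by omega)
        exact ((this.comp contDiff_fst).sub contDiff_const).const_smul _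
      · exact hf.comp (contDiff_snd.prodMk (((hV k).comp contDiff_fst).prodMk contDiff_const))
    have hcontracting : ∀ ε, ContractingWith (h ^ α * M).toNNReal fun x => φ (ε, x) := by
      refine fun ε => ⟨Real.toNNReal_lt_one.2 hcontr, LipschitzWith.of_dist_le_mul fun x y => ?_⟩
      simp only [φ, dist_eq_norm, add_sub_add_left_eq_sub, ← smul_sub, norm_smul,
        Real.norm_of_nonneg (Real.rpow_nonneg hh.le α)]
      calc h ^ α * ‖f x (V ε k) (t k) - f y (V ε k) (t k)‖ ≤ h ^ α * (M * ‖x - y‖) :=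
            mul_le_mul_of_nonneg_left (hLip k hk x y _) (Real.rpow_nonneg hh.le α)
        _ ≤ _ := by rw [← mul_assoc]; gcongr; exact Real.le_coe_toNNReal _
    refine contDiff_of_isFixedPt_of_contractingWith one_ne_zero hφ hcontracting fun ε => ?_
    simp only [Function.IsFixedPt, φ, ← hQ ε k hk1 hk, ← hQ0 ε]
    exact (eq_sub_sum_add_rpow_smul_cdMinus hh (Q ε) k).symm

theorem sum_glCoef_smul_eq_of_hasDerivAt_discreteState (hh : 0 < h)
    (hf : Differentiable ℝ fun p : Euc d × Euc m × ℝ => f p.1 p.2.1 p.2.2)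
    {w : ℕ → Euc m} (hV : ∀ k, HasDerivAt (fun ε => V ε k) (w k) 0)
    {y : ℕ → Euc d} (hy : ∀ k ≤ N, HasDerivAt (fun ε => Q ε k) (y k) 0) (hy0 : y 0 = 0)
    (hQ : ∀ ε k, 1 ≤ k → k ≤ N → cdMinus α h (Q ε) k = f (Q ε k) (V ε k) (t k))
    {k : ℕ} (hk1 : 1 ≤ k) (hk : k ≤ N) :
    ∑ r ∈ range (k + 1), glCoef α r • y (k - r)
      = h ^ α • (fderiv ℝ (fun x => f x (V 0 k) (t k)) (Q 0 k) (y k)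
          + fderiv ℝ (fun v => f (Q 0 k) v (t k)) (V 0 k) (w k)) := by
  have hsum : HasDerivAt (fun ε => ∑ r ∈ range (k + 1), glCoef α r • (Q ε (k - r) - Q ε 0))
      (∑ r ∈ range (k + 1), glCoef α r • y (k - r)) 0 := by
    refine HasDerivAt.fun_sum fun r _ => ?_
    simpa only [hy0, sub_zero] using
      ((hy (k - r) (by omega)).fun_sub (hy 0 N.zero_le)).fun_const_smul (glCoef α r)
  have hrhs := (DifferentiableAt.hasDerivAt_comp_prodMk (Φ := fun x v => f x v (t k))
    (hf.differentiableAt_fix_last (t k) _) (hy k hk) (hV k)).fun_const_smul (h ^ α)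
  refine hsum.unique (hrhs.congr_of_eventuallyEq (Eventually.of_forall fun ε => ?_))
  simp only [← rpow_smul_cdMinus hh, hQ ε k hk1 hk]

theorem hasDerivAt_sum_lagrangian (hh : 0 < h)
    (hf : Differentiable ℝ fun p : Euc d × Euc m × ℝ => f p.1 p.2.1 p.2.2)
    (hL : Differentiable ℝ fun p : Euc d × Euc m × ℝ => L p.1 p.2.1 p.2.2)
    {w : ℕ → Euc m} (hV : ∀ k, HasDerivAt (fun ε => V ε k) (w k) 0)
    {y : ℕ → Euc d} (hy : ∀ k ≤ N, HasDerivAt (fun ε => Q ε k) (y k) 0) (hQ0 : ∀ ε, Q ε 0 = A)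
    (hQ : ∀ ε k, 1 ≤ k → k ≤ N → cdMinus α h (Q ε) k = f (Q ε k) (V ε k) (t k))
    (hPN : P N = 0)
    (hP : ∀ k < N, cdPlus N α h P k
      = gradient (fun x => L x (V 0 (k + 1)) (t (k + 1))) (Q 0 (k + 1))
        + ContinuousLinearMap.adjoint
            (fderiv ℝ (fun x => f x (V 0 (k + 1)) (t (k + 1))) (Q 0 (k + 1))) (P k)) :
    HasDerivAt (fun ε => ∑ k ∈ Icc 1 N, L (Q ε k) (V ε k) (t k))
      (∑ k ∈ Icc 1 N, fderiv ℝ (fun v => Ham L f (Q 0 k) v (P (k - 1)) (t k)) (V 0 k) (w k)) 0 := by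
  have hy0 : y 0 = 0 :=
    (hy 0 N.zero_le).unique (by simpa only [hQ0] using hasDerivAt_const (0 : ℝ) A)
  have hadj : ∑ k ∈ Icc 1 N, fderiv ℝ (fun x => L x (V 0 k) (t k)) (Q 0 k) (y k)
      = ∑ k ∈ Icc 1 N, ⟪P (k - 1), fderiv ℝ (fun v => f (Q 0 k) v (t k)) (V 0 k) (w k)⟫ := by
    simp only [← inner_gradient_left]
    refine sum_inner_eq_sum_inner_of_linearized_of_adjoint (c := glCoef α)
      (B := fun k => fderiv ℝ (fun x => f x (V 0 k) (t k)) (Q 0 k))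
      (Real.rpow_pos_of_pos hh α).ne' hy0 (fun k hk => ?_) (fun k hk => ?_)
    · exact sum_glCoef_smul_eq_of_hasDerivAt_discreteState hh hf hV hy hy0 hQ
        (mem_Icc.1 hk).1 (mem_Icc.1 hk).2
    · rw [← rpow_smul_cdPlus_of_eq_zero hh hPN hk.le, hP k hk]
  refine (HasDerivAt.fun_sum fun k (hk : k ∈ Icc 1 N) =>
    DifferentiableAt.hasDerivAt_comp_prodMk (Φ := fun x v => L x v (t k))
      (hL.differentiableAt_fix_last (t k) _) (hy k (mem_Icc.1 hk).2) (hV k)).congr_deriv ?_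
  rw [sum_add_distrib, hadj, ← sum_add_distrib]
  refine sum_congr rfl fun k _ => ?_
  rw [fderiv_Ham_apply, add_comm]
  · exact (hL.differentiableAt_fix_last (t k) _).comp (V 0 k)
      ((differentiableAt_const _).prodMk differentiableAt_id)
  · exact (hf.differentiableAt_fix_last (t k) _).comp (V 0 k)
      ((differentiableAt_const _).prodMk differentiableAt_id)

end DiscreteState

theorem gateaux_derivative_via_hamiltonian_general
    (d m N : ℕ) (hN : 1 ≤ N)
    (a b : ℝ) (hab : a < b) (α : ℝ)
    (A : Euc d)
    (f : Euc d → Euc m → ℝ → Euc d)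
    (hf : ContDiff ℝ 2 fun p : Euc d × Euc m × ℝ => f p.1 p.2.1 p.2.2)
    (L : Euc d → Euc m → ℝ → ℝ)
    (hL : ContDiff ℝ 2 fun p : Euc d × Euc m × ℝ => L p.1 p.2.1 p.2.2)
    (M : ℝ)
    (hLip : ∀ (x₁ x₂ : Euc d) (v : Euc m), ∀ t ∈ Set.Icc a b,
      ‖f x₁ v t - f x₂ v t‖ ≤ M * ‖x₁ - x₂‖)
    (hMsmall : 2 * ((b - a) / (N : ℝ)) ^ α * M < 1)
    -- `SQ V` is the discrete state variable associated to the discrete control `V`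
    (SQ : (ℕ → Euc m) → ℕ → Euc d)
    (hSQ : ∀ V : ℕ → Euc m, SQ V 0 = A ∧ ∀ k, 1 ≤ k → k ≤ N →
      cdMinus α ((b - a) / (N : ℝ)) (SQ V) k
        = f (SQ V k) (V k) (a + (k : ℝ) * ((b - a) / (N : ℝ))))
    (U Ubar : ℕ → Euc m)
    -- `P` is the discrete adjoint variable associated to the discrete control `U`
    (P : ℕ → Euc d) (hPN : P N = 0)
    (hP : ∀ k, k < N →
      cdPlus N α ((b - a) / (N : ℝ)) P k
        = gradient (fun x => L x (U (k + 1)) (a + ((k : ℝ) + 1) * ((b - a) / (N : ℝ))))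
            (SQ U (k + 1))
          + (ContinuousLinearMap.adjoint
              (fderiv ℝ (fun x => f x (U (k + 1)) (a + ((k : ℝ) + 1) * ((b - a) / (N : ℝ))))
                (SQ U (k + 1)))) (P k)) :
    Filter.Tendsto
      (fun ε : ℝ =>
        ((((b - a) / (N : ℝ)) * ∑ k ∈ Finset.Icc 1 N,
            L (SQ (fun j => U j + ε • Ubar j) k) (U k + ε • Ubar k)
              (a + (k : ℝ) * ((b - a) / (N : ℝ)))) -
          ((b - a) / (N : ℝ)) * ∑ k ∈ Finset.Icc 1 N,
            L (SQ U k) (U k) (a + (k : ℝ) * ((b - a) / (N : ℝ)))) / ε)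
      (𝓝[≠] (0 : ℝ))
      (𝓝 (((b - a) / (N : ℝ)) * ∑ k ∈ Finset.Icc 1 N,
        (fderiv ℝ (fun v => Ham L f (SQ U k) v (P (k - 1)) (a + (k : ℝ) * ((b - a) / (N : ℝ))))
          (U k)) (Ubar k))) := by
  set h := (b - a) / (N : ℝ)
  set t : ℕ → ℝ := fun k => a + k * h
  set V : ℝ → ℕ → Euc m := fun ε j => U j + ε • Ubar j
  have hh : 0 < h := div_pos (by linarith) (by exact_mod_cast hN)
  have ht : ∀ k ≤ N, t k ∈ Set.Icc a b := fun k hk => by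
    have hkh : (k : ℝ) * h ≤ N * h := by gcongr
    rw [mul_div_cancel₀ _ (by positivity)] at hkh
    exact ⟨le_add_of_nonneg_right (by positivity), by linarith⟩
  have hV0 : V 0 = U := by funext j; simp [V]
  have hVd : ∀ k, HasDerivAt (fun ε => V ε k) (Ubar k) 0 := fun k =>
    (((hasDerivAt_id (0 : ℝ)).smul_const (Ubar k)).const_add (U k)).congr_deriv (one_smul ℝ _)
  have hQ0 := fun ε => (hSQ (V ε)).1
  have hQ := fun ε => (hSQ (V ε)).2
  have hQd := contDiff_discreteState hh (by linarith) (hf.of_le one_le_two)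
    (fun k hk x₁ x₂ v => hLip x₁ x₂ v _ (ht k hk)) (fun k => by fun_prop) hQ0 hQ
  have hcost := (hasDerivAt_sum_lagrangian hh (hf.differentiable two_ne_zero)
    (hL.differentiable two_ne_zero) hVd
    (fun k hk => ((hQd k hk).differentiable one_ne_zero 0).hasDerivAt) hQ0 hQ hPN
    (by simpa only [hV0, t, Nat.cast_add_one] using hP)).const_mul h
  rw [hV0] at hcost
  refine (hasDerivAt_iff_tendsto_slope.1 hcost).congr fun ε => ?_
  simp only [slope_def_field, sub_zero, hV0]
  rfl

/-- **Representation of the Gâteaux derivative of the discrete cost functional via the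
Hamiltonian and the discrete adjoint variable.** -/
theorem gateaux_derivative_via_hamiltonian
    (d m N : ℕ) (hd : 1 ≤ d) (hm : 1 ≤ m) (hN : 1 ≤ N)
    (a b : ℝ) (hab : a < b) (α : ℝ) (hα : 0 < α) (hα1 : α ≤ 1)
    (A : Euc d)
    (f : Euc d → Euc m → ℝ → Euc d)
    (hf : ContDiff ℝ 2 fun p : Euc d × Euc m × ℝ => f p.1 p.2.1 p.2.2)
    (L : Euc d → Euc m → ℝ → ℝ)
    (hL : ContDiff ℝ 2 fun p : Euc d × Euc m × ℝ => L p.1 p.2.1 p.2.2)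
    (M : ℝ) (hM : 0 ≤ M)
    (hLip : ∀ (x₁ x₂ : Euc d) (v : Euc m), ∀ t ∈ Set.Icc a b,
      ‖f x₁ v t - f x₂ v t‖ ≤ M * ‖x₁ - x₂‖)
    (hMsmall : 2 * ((b - a) / (N : ℝ)) ^ α * M < 1)
    -- `SQ V` is the discrete state variable associated to the discrete control `V`
    (SQ : (ℕ → Euc m) → ℕ → Euc d)
    (hSQ : ∀ V : ℕ → Euc m, SQ V 0 = A ∧ ∀ k, 1 ≤ k → k ≤ N →
      cdMinus α ((b - a) / (N : ℝ)) (SQ V) k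
        = f (SQ V k) (V k) (a + (k : ℝ) * ((b - a) / (N : ℝ))))
    (U Ubar : ℕ → Euc m)
    -- `P` is the discrete adjoint variable associated to the discrete control `U`
    (P : ℕ → Euc d) (hPN : P N = 0)
    (hP : ∀ k, k < N →
      cdPlus N α ((b - a) / (N : ℝ)) P k
        = gradient (fun x => L x (U (k + 1)) (a + ((k : ℝ) + 1) * ((b - a) / (N : ℝ))))
            (SQ U (k + 1))
          + (ContinuousLinearMap.adjoint
              (fderiv ℝ (fun x => f x (U (k + 1)) (a + ((k : ℝ) + 1) * ((b - a) / (N : ℝ))))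
                (SQ U (k + 1)))) (P k)) :
    Filter.Tendsto
      (fun ε : ℝ =>
        ((((b - a) / (N : ℝ)) * ∑ k ∈ Finset.Icc 1 N,
            L (SQ (fun j => U j + ε • Ubar j) k) (U k + ε • Ubar k)
              (a + (k : ℝ) * ((b - a) / (N : ℝ)))) -
          ((b - a) / (N : ℝ)) * ∑ k ∈ Finset.Icc 1 N,
            L (SQ U k) (U k) (a + (k : ℝ) * ((b - a) / (N : ℝ)))) / ε)
      (𝓝[≠] (0 : ℝ))
      (𝓝 (((b - a) / (N : ℝ)) * ∑ k ∈ Finset.Icc 1 N,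
        (fderiv ℝ (fun v => Ham L f (SQ U k) v (P (k - 1)) (a + (k : ℝ) * ((b - a) / (N : ℝ))))
          (U k)) (Ubar k))) :=
  gateaux_derivative_via_hamiltonian_general d m N hN a b hab α A f hf L hL M hLip hMsmall SQ hSQ U
    Ubar P hPN hP
end
end

section
/- Link with the discrete fractional Euler–Lagrange equation: Take m = d and f(x,v,t) = v. If (Q,U,P) ∈ (ℝ^d)^{N+1} × (ℝ^d)^{N+1} × (ℝ^d)^{N+1} solves the shifted discrete fractional Pontryagin system (σPS), then Q solves the discrete fractional Euler–Lagrange equation: for every k = 0,…,N−1, ∂L/∂x(Q_{k+1}, (ᶜΔ^α_− Q)_{k+1}, t_{k+1}) + (Δ^α_+ W)_k = 0, where W ∈ (ℝ^d)^{N+1} is defined by W_j = ∂L/∂v(Q_{j+1}, (ᶜΔ^α_− Q)_{j+1}, t_{j+1}) for j = 0,…,N−1 and W_N = 0. -/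
open Finset Filter
open scoped RealInnerProductSpace Topology

noncomputable section

/-- The shifted discrete fractional Pontryagin system `(σPS)` associated to the Hamiltonian `H`:
`Q_0 = A`, `P_N = 0`, `(ᶜΔ^α_− Q)_k = ∂H/∂w(Q_k, U_k, P_{k−1}, t_k)` for `k = 1,…,N`,
`(Δ^α_+ P)_k = ∂H/∂x(Q_{k+1}, U_{k+1}, P_k, t_{k+1})` for `k = 0,…,N−1`, and
`∂H/∂v(Q_k, U_k, P_{k−1}, t_k) = 0` for `k = 1,…,N`. -/
def SigmaPS {d m : ℕ} (N : ℕ) (α hstep a : ℝ) (A : Euc d)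
    (H : Euc d → Euc m → Euc d → ℝ → ℝ)
    (Q : ℕ → Euc d) (U : ℕ → Euc m) (P : ℕ → Euc d) : Prop :=
  Q 0 = A ∧ P N = 0 ∧
  (∀ k, 1 ≤ k → k ≤ N →
    cdMinus α hstep Q k
      = gradient (fun w => H (Q k) (U k) w (a + (k : ℝ) * hstep)) (P (k - 1))) ∧
  (∀ k, k < N →
    dPlus N α hstep P k
      = gradient (fun x => H x (U (k + 1)) (P k) (a + ((k : ℝ) + 1) * hstep)) (Q (k + 1))) ∧
  (∀ k, 1 ≤ k → k ≤ N →
    gradient (fun v => H (Q k) v (P (k - 1)) (a + (k : ℝ) * hstep)) (U k) = 0)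

/-!
With `H = L + ⟪w, v⟫`, the three equations of `(σPS)` read `ᶜΔ^α_− Q = U`,
`∂L/∂v(Q_{k+1}, U_{k+1}, t_{k+1}) = -P_k` and `Δ^α_+ P = ∂L/∂x`. Hence `W = -P` on `0,…,N`
(at `N` both vanish), and linearity of `Δ^α_+` turns the costate equation into the discrete
Euler–Lagrange equation.
-/

section Gradient

variable {F : Type*} [NormedAddCommGroup F] [InnerProductSpace ℝ F] [CompleteSpace F]

theorem gradient_add_inner_right {g : F → ℝ} {u : F} (hg : DifferentiableAt ℝ g u) (w : F) :
    gradient (fun v => g v + ⟪w, v⟫) u = gradient g u + w := by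
  refine HasGradientAt.gradient ?_
  rw [hasGradientAt_iff_hasFDerivAt, map_add]
  exact (hasGradientAt_iff_hasFDerivAt.mp hg.hasGradientAt).add (innerSL ℝ w).hasFDerivAt

theorem gradient_const_add_inner_left (c : ℝ) (v p : F) :
    gradient (fun w => c + ⟪w, v⟫) p = v := by
  simp only [real_inner_comm v]
  simpa using gradient_add_inner_right (differentiableAt_const c) v (u := p)

theorem gradient_add_const (g : F → ℝ) (x : F) (c : ℝ) :
    gradient (fun y => g y + c) x = gradient g x := by
  rw [gradient, gradient, fderiv_add_const]

end Gradient

section DiscreteDerivative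

variable {n N : ℕ} {α h : ℝ}

theorem dPlus_congr {G G' : ℕ → Euc n} {k : ℕ} (hk : k ≤ N)
    (hG : ∀ j, k ≤ j → j ≤ N → G j = G' j) :
    dPlus N α h G k = dPlus N α h G' k := by
  unfold dPlus
  congr 1
  refine Finset.sum_congr rfl fun r hr => ?_
  rw [hG (k + r) (by omega) (by simp at hr; omega)]

theorem dPlus_neg (G : ℕ → Euc n) (k : ℕ) :
    dPlus N α h (fun j => -G j) k = -dPlus N α h G k := by
  simp only [dPlus, smul_neg, Finset.sum_neg_distrib]

end DiscreteDerivative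

namespace SigmaPS

variable {d N : ℕ} {α h a : ℝ} {A : Euc d} {L : Euc d → Euc d → ℝ → ℝ} {Q U P : ℕ → Euc d}

theorem cdMinus_eq_control (hsol : SigmaPS N α h a A (fun x v w t => L x v t + ⟪w, v⟫) Q U P)
    {k : ℕ} (hk : 1 ≤ k) (hkN : k ≤ N) : cdMinus α h Q k = U k := by
  obtain ⟨-, -, hstate, -, -⟩ := hsol
  rw [hstate k hk hkN, gradient_const_add_inner_left]

theorem dPlus_costate (hsol : SigmaPS N α h a A (fun x v w t => L x v t + ⟪w, v⟫) Q U P)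
    {k : ℕ} (hk : k < N) :
    dPlus N α h P k = gradient (fun x => L x (U (k + 1)) (a + ((k : ℝ) + 1) * h)) (Q (k + 1)) := by
  obtain ⟨-, -, -, hcostate, -⟩ := hsol
  rw [hcostate k hk, gradient_add_const]

theorem gradient_control_eq_neg_costate
    (hsol : SigmaPS N α h a A (fun x v w t => L x v t + ⟪w, v⟫) Q U P)
    (hLv : ∀ x t, Differentiable ℝ fun v => L x v t) {j : ℕ} (hj : j < N) :
    gradient (fun v => L (Q (j + 1)) v (a + ((j : ℝ) + 1) * h)) (U (j + 1)) = -P j := by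
  obtain ⟨-, -, -, -, hstationary⟩ := hsol
  have hstat := hstationary (j + 1) (by omega) (by omega)
  push_cast at hstat
  rw [gradient_add_inner_right (hLv _ _ _)] at hstat
  exact eq_neg_of_add_eq_zero_left hstat

end SigmaPS

theorem euler_lagrange_link_general
    (d N : ℕ)
    (a b : ℝ) (α : ℝ)
    (A : Euc d)
    (L : Euc d → Euc d → ℝ → ℝ)
    (hL : ContDiff ℝ 2 fun p : Euc d × Euc d × ℝ => L p.1 p.2.1 p.2.2)
    (Q U P : ℕ → Euc d)
    (hsol : SigmaPS N α ((b - a) / (N : ℝ)) a A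
      (fun x v w t => L x v t + ⟪w, v⟫) Q U P)
    (W : ℕ → Euc d)
    (hW : ∀ j, j < N → W j
      = gradient (fun v => L (Q (j + 1)) v (a + ((j : ℝ) + 1) * ((b - a) / (N : ℝ))))
          (cdMinus α ((b - a) / (N : ℝ)) Q (j + 1)))
    (hWN : W N = 0) :
    ∀ k, k < N →
      gradient
          (fun x => L x (cdMinus α ((b - a) / (N : ℝ)) Q (k + 1))
            (a + ((k : ℝ) + 1) * ((b - a) / (N : ℝ))))
          (Q (k + 1))
        + dPlus N α ((b - a) / (N : ℝ)) W k = 0 := by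
  have hLv : ∀ x t, Differentiable ℝ fun v => L x v t := fun x t =>
    (hL.differentiable (by norm_num)).comp (f := fun v => (x, v, t)) (by fun_prop)
  have hWP : ∀ j, j ≤ N → W j = -P j := by
    intro j hj
    rcases hj.lt_or_eq with hj | rfl
    · rw [hW j hj, hsol.cdMinus_eq_control (by omega) (by omega),
        hsol.gradient_control_eq_neg_costate hLv hj]
    · obtain ⟨-, hPN, -⟩ := hsol
      rw [hWN, hPN, neg_zero]
  intro k hk
  rw [dPlus_congr hk.le fun j _ hj => hWP j hj, dPlus_neg, hsol.dPlus_costate hk,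
    hsol.cdMinus_eq_control (by omega) (by omega), add_neg_cancel]

/-- **Link with the discrete fractional Euler–Lagrange equation**: with `m = d` and
`f(x,v,t) = v`, any solution of the shifted discrete fractional Pontryagin system yields a
solution `Q` of the discrete fractional Euler–Lagrange equation. -/
theorem euler_lagrange_link
    (d N : ℕ) (hd : 1 ≤ d) (hN : 1 ≤ N)
    (a b : ℝ) (hab : a < b) (α : ℝ) (hα : 0 < α) (hα1 : α ≤ 1)
    (A : Euc d)
    (L : Euc d → Euc d → ℝ → ℝ)
    (hL : ContDiff ℝ 2 fun p : Euc d × Euc d × ℝ => L p.1 p.2.1 p.2.2)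
    (Q U P : ℕ → Euc d)
    (hsol : SigmaPS N α ((b - a) / (N : ℝ)) a A
      (fun x v w t => L x v t + ⟪w, v⟫) Q U P)
    (W : ℕ → Euc d)
    (hW : ∀ j, j < N → W j
      = gradient (fun v => L (Q (j + 1)) v (a + ((j : ℝ) + 1) * ((b - a) / (N : ℝ))))
          (cdMinus α ((b - a) / (N : ℝ)) Q (j + 1)))
    (hWN : W N = 0) :
    ∀ k, k < N →
      gradient
          (fun x => L x (cdMinus α ((b - a) / (N : ℝ)) Q (k + 1))
            (a + ((k : ℝ) + 1) * ((b - a) / (N : ℝ))))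
          (Q (k + 1))
        + dPlus N α ((b - a) / (N : ℝ)) W k = 0 :=
  euler_lagrange_link_general d N a b α A L hL Q U P hsol W hW hWN
end
end

section
/- Discrete symmetry yields the Torres–Frederico-type identity: Let φ₁, φ₂, φ₃ be one-parameter groups of diffeomorphisms of ℝ^d, ℝ^m, ℝ^d respectively, and assume that the Hamiltonian H is ᶜΔ^α_−-invariant under (φ₁,φ₂,φ₃). Then for every solution (Q,U,P) of the shifted discrete fractional Pontryagin system (σPS) and every k = 1,…,N: ∂φ₁/∂s(0, Q_k) · (Δ^α_+ P)_{k−1} − (ᶜΔ^α_− G)_k · P_{k−1} = 0, where G ∈ (ℝ^d)^{N+1} is the sequence G_j = ∂φ₁/∂s(0, Q_j). -/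
open Finset Filter
open scoped RealInnerProductSpace Topology

noncomputable section

/-- A one-parameter group of diffeomorphisms of `ℝ^n`: a `C²` map `φ : ℝ × ℝ^n → ℝ^n` with
`φ(0,·) = id`, `φ(s,·) ∘ φ(s',·) = φ(s+s',·)`, each `φ(s,·)` being a diffeomorphism
(its inverse `φ(−s,·)` is automatically `C²`, so we only record bijectivity). -/
def OneParamGroup {n : ℕ} (φ : ℝ → Euc n → Euc n) : Prop :=
  ContDiff ℝ 2 (fun p : ℝ × Euc n => φ p.1 p.2) ∧
  (∀ x, φ 0 x = x) ∧
  (∀ s s' x, φ s (φ s' x) = φ (s + s') x) ∧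
  (∀ s, Function.Bijective (φ s))

/-- The Hamiltonian `H` is `ᶜΔ^α_−`-invariant under the action of the three one-parameter
groups of diffeomorphisms `(φ₁, φ₂, φ₃)`. -/
def CDeltaInvariant {d m : ℕ} (N : ℕ) (α hstep a : ℝ) (A : Euc d)
    (H : Euc d → Euc m → Euc d → ℝ → ℝ)
    (φ₁ : ℝ → Euc d → Euc d) (φ₂ : ℝ → Euc m → Euc m) (φ₃ : ℝ → Euc d → Euc d) : Prop :=
  ∀ (Q : ℕ → Euc d) (U : ℕ → Euc m) (P : ℕ → Euc d),
    SigmaPS N α hstep a A H Q U P → ∀ s : ℝ, ∀ k, 1 ≤ k → k ≤ N →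
      H (φ₁ s (Q k)) (φ₂ s (U k)) (φ₃ s (P (k - 1))) (a + (k : ℝ) * hstep)
        - ⟪φ₃ s (P (k - 1)), cdMinus α hstep (fun j => φ₁ s (Q j)) k⟫
      = H (Q k) (U k) (P (k - 1)) (a + (k : ℝ) * hstep)
        - ⟪P (k - 1), cdMinus α hstep Q k⟫


/-!
Differentiate the invariance identity at `s = 0`. By the chain rule the Hamiltonian term
contributes the partial gradients of `H` paired with the infinitesimal generators
`G_k = ∂φ₁/∂s(0, Q_k)`, `ξ = ∂φ₂/∂s(0, U_k)`, `η = ∂φ₃/∂s(0, P_{k−1})`, while the pairing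
term contributes `⟨η, (ᶜΔ^α_− Q)_k⟩ + ⟨P_{k−1}, (ᶜΔ^α_− G)_k⟩`, since `ᶜΔ^α_−` is linear.
The Pontryagin system gives `∂H/∂v = 0`, `∂H/∂w = (ᶜΔ^α_− Q)_k`, which cancels the `η`-terms,
and `∂H/∂x = (Δ^α_+ P)_{k−1}`; what remains is the identity.
-/

section PartialDerivatives

variable {𝕜 E F G : Type*} [NontriviallyNormedField 𝕜]
  [NormedAddCommGroup E] [NormedSpace 𝕜 E] [NormedAddCommGroup F] [NormedSpace 𝕜 F]
  [NormedAddCommGroup G] [NormedSpace 𝕜 G]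

theorem fderiv_prod_apply_eq_add {Φ : E × F → G} {x : E} {y : F}
    (hΦ : DifferentiableAt 𝕜 Φ (x, y)) (u : E) (v : F) :
    fderiv 𝕜 Φ (x, y) (u, v)
      = fderiv 𝕜 (fun x' => Φ (x', y)) x u + fderiv 𝕜 (fun y' => Φ (x, y')) y v := by
  have hx : HasFDerivAt (fun x' => Φ (x', y)) ((fderiv 𝕜 Φ (x, y)).comp (.inl 𝕜 E F)) x :=
    hΦ.hasFDerivAt.comp x (hasFDerivAt_prodMk_left x y)
  have hy : HasFDerivAt (fun y' => Φ (x, y')) ((fderiv 𝕜 Φ (x, y)).comp (.inr 𝕜 E F)) y :=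
    hΦ.hasFDerivAt.comp y (hasFDerivAt_prodMk_right x y)
  rw [hx.fderiv, hy.fderiv, ContinuousLinearMap.comp_apply, ContinuousLinearMap.comp_apply,
    ← map_add, ContinuousLinearMap.inl_apply, ContinuousLinearMap.inr_apply, Prod.mk_add_mk,
    add_zero, zero_add]

end PartialDerivatives

section Gradient

variable {E F G : Type*} [NormedAddCommGroup E] [InnerProductSpace ℝ E] [CompleteSpace E]
  [NormedAddCommGroup F] [InnerProductSpace ℝ F] [CompleteSpace F]
  [NormedAddCommGroup G] [InnerProductSpace ℝ G] [CompleteSpace G]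

theorem hasDerivAt_comp₃_inner_gradient {Φ : E → F → G → ℝ} {x : E} {y : F} {z : G}
    (hΦ : DifferentiableAt ℝ (fun p : E × F × G => Φ p.1 p.2.1 p.2.2) (x, y, z))
    {γ₁ : ℝ → E} {γ₂ : ℝ → F} {γ₃ : ℝ → G} {u : E} {v : F} {w : G} {s : ℝ}
    (h₁ : HasDerivAt γ₁ u s) (h₂ : HasDerivAt γ₂ v s) (h₃ : HasDerivAt γ₃ w s)
    (hx : γ₁ s = x) (hy : γ₂ s = y) (hz : γ₃ s = z) :
    HasDerivAt (fun s => Φ (γ₁ s) (γ₂ s) (γ₃ s))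
      (⟪gradient (fun x' => Φ x' y z) x, u⟫ + ⟪gradient (fun y' => Φ x y' z) y, v⟫
        + ⟪gradient (fun z' => Φ x y z') z, w⟫) s := by
  subst hx hy hz
  have hΦyz : DifferentiableAt ℝ (fun q : F × G => Φ (γ₁ s) q.1 q.2) (γ₂ s, γ₃ s) :=
    hΦ.comp (γ₂ s, γ₃ s) (differentiableAt_const _ |>.prodMk differentiableAt_id)
  refine (hΦ.hasFDerivAt.comp_hasDerivAt s (h₁.prodMk (h₂.prodMk h₃))).congr_deriv ?_
  rw [fderiv_prod_apply_eq_add hΦ, fderiv_prod_apply_eq_add hΦyz, inner_gradient_left,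
    inner_gradient_left, inner_gradient_left, add_assoc]

end Gradient

theorem hasDerivAt_dMinus {n : ℕ} (α h : ℝ) (k : ℕ) {G : ℝ → ℕ → Euc n} {G' : ℕ → Euc n}
    {s : ℝ} (hG : ∀ j, HasDerivAt (fun s => G s j) (G' j) s) :
    HasDerivAt (fun s => dMinus α h (G s) k) (dMinus α h G' k) s :=
  (HasDerivAt.fun_sum fun r _ => (hG (k - r)).const_smul (glCoef α r)).const_smul (h ^ (-α))

theorem hasDerivAt_cdMinus {n : ℕ} (α h : ℝ) (k : ℕ) {G : ℝ → ℕ → Euc n} {G' : ℕ → Euc n}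
    {s : ℝ} (hG : ∀ j, HasDerivAt (fun s => G s j) (G' j) s) :
    HasDerivAt (fun s => cdMinus α h (G s) k) (cdMinus α h G' k) s :=
  hasDerivAt_dMinus α h k fun j => (hG j).sub (hG 0)

theorem OneParamGroup.hasDerivAt_zero {n : ℕ} {φ : ℝ → Euc n → Euc n} (hφ : OneParamGroup φ)
    (x : Euc n) : HasDerivAt (fun s => φ s x) (deriv (fun s => φ s x) 0) 0 :=
  ((hφ.1.differentiable two_ne_zero).comp (differentiable_id.prodMk (differentiable_const x))
    0).hasDerivAt

theorem differentiable_ham {d m : ℕ} {L : Euc d → Euc m → ℝ → ℝ} {f : Euc d → Euc m → ℝ → Euc d}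
    (hL : Differentiable ℝ fun p : Euc d × Euc m × ℝ => L p.1 p.2.1 p.2.2)
    (hf : Differentiable ℝ fun p : Euc d × Euc m × ℝ => f p.1 p.2.1 p.2.2) (t : ℝ) :
    Differentiable ℝ fun p : Euc d × Euc m × Euc d => Ham L f p.1 p.2.1 p.2.2 t := by
  have hxv : Differentiable ℝ
      fun p : Euc d × Euc m × Euc d => ((p.1, p.2.1, t) : Euc d × Euc m × ℝ) := by
    fun_prop
  exact (hL.comp hxv).add (differentiable_snd.snd.inner ℝ (hf.comp hxv))

theorem SigmaPS.dPlus_pred_eq {d m N : ℕ} {α h a : ℝ} {A : Euc d}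
    {H : Euc d → Euc m → Euc d → ℝ → ℝ} {Q : ℕ → Euc d} {U : ℕ → Euc m} {P : ℕ → Euc d}
    (hsol : SigmaPS N α h a A H Q U P) {k : ℕ} (hk1 : 1 ≤ k) (hkN : k ≤ N) :
    dPlus N α h P (k - 1) = gradient (fun x => H x (U k) (P (k - 1)) (a + k * h)) (Q k) := by
  obtain ⟨k, rfl⟩ : ∃ k', k = k' + 1 := ⟨k - 1, by omega⟩
  simpa using hsol.2.2.2.1 k (by omega)

theorem discrete_symmetry_identity_general
    (d m N : ℕ)
    (a b : ℝ) (α : ℝ)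
    (A : Euc d)
    (f : Euc d → Euc m → ℝ → Euc d)
    (hf : ContDiff ℝ 2 fun p : Euc d × Euc m × ℝ => f p.1 p.2.1 p.2.2)
    (L : Euc d → Euc m → ℝ → ℝ)
    (hL : ContDiff ℝ 2 fun p : Euc d × Euc m × ℝ => L p.1 p.2.1 p.2.2)
    (φ₁ : ℝ → Euc d → Euc d) (φ₂ : ℝ → Euc m → Euc m) (φ₃ : ℝ → Euc d → Euc d)
    (hφ₁ : OneParamGroup φ₁) (hφ₂ : OneParamGroup φ₂) (hφ₃ : OneParamGroup φ₃)
    (hinv : CDeltaInvariant N α ((b - a) / (N : ℝ)) a A (Ham L f) φ₁ φ₂ φ₃) :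
    ∀ (Q : ℕ → Euc d) (U : ℕ → Euc m) (P : ℕ → Euc d),
      SigmaPS N α ((b - a) / (N : ℝ)) a A (Ham L f) Q U P →
      ∀ k, 1 ≤ k → k ≤ N →
        ⟪deriv (fun s => φ₁ s (Q k)) 0, dPlus N α ((b - a) / (N : ℝ)) P (k - 1)⟫
          - ⟪cdMinus α ((b - a) / (N : ℝ)) (fun j => deriv (fun s => φ₁ s (Q j)) 0) k,
              P (k - 1)⟫
        = 0 := by
  intro Q U P hsol k hk1 hkN
  set h := (b - a) / (N : ℝ)
  have hHam := hasDerivAt_comp₃_inner_gradient (Φ := fun x v w => Ham L f x v w (a + k * h))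
    (differentiable_ham (hL.differentiable two_ne_zero) (hf.differentiable two_ne_zero) _ _)
    (hφ₁.hasDerivAt_zero (Q k)) (hφ₂.hasDerivAt_zero (U k)) (hφ₃.hasDerivAt_zero (P (k - 1)))
    (hφ₁.2.1 _) (hφ₂.2.1 _) (hφ₃.2.1 _)
  have hpair := (hφ₃.hasDerivAt_zero (P (k - 1))).inner ℝ
    (hasDerivAt_cdMinus α h k fun j => hφ₁.hasDerivAt_zero (Q j))
  simp only [hφ₁.2.1, hφ₃.2.1] at hpair
  -- by invariance the flowed quantity is constant in `s`, so its derivative vanishes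
  have hzero := ((hasDerivAt_const (0 : ℝ) _).congr_of_eventuallyEq
    (Eventually.of_forall fun s => hinv Q U P hsol s k hk1 hkN)).unique (hHam.sub hpair)
  have ⟨_, _, hstate, _, hstationary⟩ := hsol
  rw [← hsol.dPlus_pred_eq hk1 hkN, ← hstate k hk1 hkN, hstationary k hk1 hkN,
    inner_zero_left] at hzero
  linarith [real_inner_comm (cdMinus α h Q k) (deriv (fun s => φ₃ s (P (k - 1))) 0),
    real_inner_comm (dPlus N α h P (k - 1)) (deriv (fun s => φ₁ s (Q k)) 0),
    real_inner_comm (P (k - 1)) (cdMinus α h (fun j => deriv (fun s => φ₁ s (Q j)) 0) k)]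

/-- **Discrete symmetry yields the Torres–Frederico-type identity.** -/
theorem discrete_symmetry_identity
    (d m N : ℕ) (hd : 1 ≤ d) (hm : 1 ≤ m) (hN : 1 ≤ N)
    (a b : ℝ) (hab : a < b) (α : ℝ) (hα : 0 < α) (hα1 : α ≤ 1)
    (A : Euc d)
    (f : Euc d → Euc m → ℝ → Euc d)
    (hf : ContDiff ℝ 2 fun p : Euc d × Euc m × ℝ => f p.1 p.2.1 p.2.2)
    (L : Euc d → Euc m → ℝ → ℝ)
    (hL : ContDiff ℝ 2 fun p : Euc d × Euc m × ℝ => L p.1 p.2.1 p.2.2)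
    (φ₁ : ℝ → Euc d → Euc d) (φ₂ : ℝ → Euc m → Euc m) (φ₃ : ℝ → Euc d → Euc d)
    (hφ₁ : OneParamGroup φ₁) (hφ₂ : OneParamGroup φ₂) (hφ₃ : OneParamGroup φ₃)
    (hinv : CDeltaInvariant N α ((b - a) / (N : ℝ)) a A (Ham L f) φ₁ φ₂ φ₃) :
    ∀ (Q : ℕ → Euc d) (U : ℕ → Euc m) (P : ℕ → Euc d),
      SigmaPS N α ((b - a) / (N : ℝ)) a A (Ham L f) Q U P →
      ∀ k, 1 ≤ k → k ≤ N →
        ⟪deriv (fun s => φ₁ s (Q k)) 0, dPlus N α ((b - a) / (N : ℝ)) P (k - 1)⟫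
          - ⟪cdMinus α ((b - a) / (N : ℝ)) (fun j => deriv (fun s => φ₁ s (Q j)) 0) k,
              P (k - 1)⟫
        = 0 :=
  discrete_symmetry_identity_general d m N a b α A f hf L hL φ₁ φ₂ φ₃ hφ₁ hφ₂ hφ₃ hinv
end
end
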